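/- arXiv:1703.09351 — 3 statements merged into one kernel-verified Lean document; each statement's English description precedes it below -/
import Mathlib

section
/- Let R be a norm on ℝ^n that is decomposable with respect to a subspace pair (M, M̄^⊥), i.e., R(θ + γ) = R(θ) + R(γ) for all θ ∈ M and γ ∈ M̄^⊥, where M ⊆ M̄ are linear subspaces. Then for any vectors θ ∈ ℝ^n and Δ ∈ ℝ^n, R(θ + Δ) − R(θ) ≥ R(Δ_{M̄^⊥}) − R(Δ_{M̄}) − 2 R(θ_{M^⊥}), where v_S denotes the Euclidean projection of v onto the subspace S. -/
theorem stmt_6 (n : ℕ) (R : Seminorm ℝ (EuclideanSpace ℝ (Fin n)))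
    (M M' : Submodule ℝ (EuclideanSpace ℝ (Fin n))) (hMM' : M ≤ M')
    (hdecomp : ∀ θ ∈ M, ∀ γ ∈ M'ᗮ, R (θ + γ) = R θ + R γ)
    (θ Δ : EuclideanSpace ℝ (Fin n)) :
    R (θ + Δ) - R θ ≥
      R (Submodule.orthogonalProjectionOnto M'ᗮ Δ : EuclideanSpace ℝ (Fin n)) -
        R (Submodule.orthogonalProjectionOnto M' Δ : EuclideanSpace ℝ (Fin n)) -
        2 * R (Submodule.orthogonalProjectionOnto Mᗮ θ : EuclideanSpace ℝ (Fin n)) := by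
  set a : EuclideanSpace ℝ (Fin n) := (Submodule.orthogonalProjectionOnto M θ : EuclideanSpace ℝ (Fin n))
  set b : EuclideanSpace ℝ (Fin n) := (Submodule.orthogonalProjectionOnto Mᗮ θ : EuclideanSpace ℝ (Fin n))
  set c : EuclideanSpace ℝ (Fin n) := (Submodule.orthogonalProjectionOnto M' Δ : EuclideanSpace ℝ (Fin n))
  set d : EuclideanSpace ℝ (Fin n) := (Submodule.orthogonalProjectionOnto M'ᗮ Δ : EuclideanSpace ℝ (Fin n))
  have hθ : a + b = θ := Submodule.starProjection_add_starProjection_orthogonal (K := M) θ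
  have hΔ : c + d = Δ := Submodule.starProjection_add_starProjection_orthogonal (K := M') Δ
  have hdec : R (a + d) = R a + R d :=
    hdecomp a (Submodule.orthogonalProjectionOnto M θ).2 d (Submodule.orthogonalProjectionOnto M'ᗮ Δ).2
  have h1 : R (a + d) ≤ R (θ + Δ) + R (b + c) := by
    have heq : a + d = (θ + Δ) - (b + c) := by rw [← hθ, ← hΔ]; abel
    rw [heq]; exact map_sub_le_add R _ _
  have h2 : R (b + c) ≤ R b + R c := map_add_le_add R b c
  have h3 : R θ ≤ R a + R b := by rw [← hθ]; exact map_add_le_add R a b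
  linarith [hdec]
end

section
/- Let L : ℝ^n → ℝ be strongly convex with curvature κ > 0 (i.e., L(θ+Δ) ≥ L(θ) + ⟨∇L(θ),Δ⟩ + κ‖Δ‖₂² for all θ,Δ), let R be a norm on ℝ^n decomposable with respect to a subspace pair (M, M̄^⊥) with M ⊆ M̄, let θ* ∈ ℝ^n, λ > 0, and suppose θ̂ ∈ ℝ^n satisfies R(θ̂) + λ·L(θ̂) ≤ R(θ) + λ·L(θ) for all θ ∈ ℝ^n. If λ ≤ 1/R*(∇L(θ*)), then ‖θ̂ − θ*‖₂² ≤ (4/(κ²λ²))·Ψ(M̄)² + (4/(κλ))·R(θ*_{M^⊥}), where Ψ(M̄) = sup_{u ∈ M̄, u≠0} R(u)/‖u‖₂ and θ*_{M^⊥} is the Euclidean projection of θ* onto M^⊥. -/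
open RealInnerProductSpace in
/-- Any seminorm on a Euclidean space is bounded by a multiple of the norm. -/
lemma seminorm_bound (n : ℕ) (R : Seminorm ℝ (EuclideanSpace ℝ (Fin n))) :
    ∃ C : ℝ, ∀ u : EuclideanSpace ℝ (Fin n), R u ≤ C * ‖u‖ := by
  refine ⟨∑ i : Fin n, R (EuclideanSpace.single i 1), fun u => ?_⟩
  have hrepr : ∑ i : Fin n, u i • EuclideanSpace.single i (1:ℝ) = u := by
    have h := (EuclideanSpace.basisFun (Fin n) ℝ).sum_repr u
    simpa [EuclideanSpace.basisFun_apply, EuclideanSpace.basisFun_repr] using h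
  have hcoord : ∀ i : Fin n, |u i| ≤ ‖u‖ := by
    intro i
    have h1 : ⟪EuclideanSpace.single i (1:ℝ), u⟫ = u i := by
      rw [EuclideanSpace.inner_single_left]; simp
    have h2 := abs_real_inner_le_norm (EuclideanSpace.single i (1:ℝ)) u
    rw [h1, EuclideanSpace.norm_single] at h2
    simpa using h2
  calc R u = R (∑ i : Fin n, u i • EuclideanSpace.single i (1:ℝ)) := by rw [hrepr]
    _ ≤ ∑ i : Fin n, R (u i • EuclideanSpace.single i (1:ℝ)) :=
        Finset.le_sum_of_subadditive R (map_zero R).le (map_add_le_add R) _ _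
    _ = ∑ i : Fin n, |u i| * R (EuclideanSpace.single i (1:ℝ)) := by
        simp [map_smul_eq_mul, Real.norm_eq_abs]
    _ ≤ ∑ i : Fin n, ‖u‖ * R (EuclideanSpace.single i (1:ℝ)) := by
        refine Finset.sum_le_sum fun i _ => ?_
        exact mul_le_mul_of_nonneg_right (hcoord i) (apply_nonneg R _)
    _ = (∑ i : Fin n, R (EuclideanSpace.single i 1)) * ‖u‖ := by
        rw [← Finset.mul_sum, mul_comm]

open RealInnerProductSpace in
set_option maxHeartbeats 800000 in
theorem stmt_14 (n : ℕ) (L : EuclideanSpace ℝ (Fin n) → ℝ)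
    (hdiff : Differentiable ℝ L) (κ : ℝ) (hκ : 0 < κ)
    (hsc : ∀ θ Δ : EuclideanSpace ℝ (Fin n),
      L (θ + Δ) ≥ L θ + ⟪gradient L θ, Δ⟫ + κ * ‖Δ‖ ^ 2)
    (R : Seminorm ℝ (EuclideanSpace ℝ (Fin n))) (hdef : ∀ u, R u = 0 → u = 0)
    (M M' : Submodule ℝ (EuclideanSpace ℝ (Fin n))) (hMM' : M ≤ M')
    (hdecomp : ∀ θ ∈ M, ∀ γ ∈ M'ᗮ, R (θ + γ) = R θ + R γ)
    (θstar θhat : EuclideanSpace ℝ (Fin n)) (l : ℝ) (hl : 0 < l)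
    (hmin : ∀ θ, R θhat + l * L θhat ≤ R θ + l * L θ)
    (hlam : l ≤ 1 / sSup {x : ℝ | ∃ u, R u ≤ 1 ∧ x = ⟪u, gradient L θstar⟫}) :
    ‖θhat - θstar‖ ^ 2 ≤
      4 / (κ ^ 2 * l ^ 2) *
          (sSup {r : ℝ | ∃ u ∈ M', u ≠ 0 ∧ r = R u / ‖u‖}) ^ 2 +
        4 / (κ * l) * R (Submodule.orthogonalProjectionOnto Mᗮ θstar : EuclideanSpace ℝ (Fin n)) := by
  classical
  set g : EuclideanSpace ℝ (Fin n) := gradient L θstar with hg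
  set Δ : EuclideanSpace ℝ (Fin n) := θhat - θstar with hΔ
  set s : ℝ := sSup {x : ℝ | ∃ u, R u ≤ 1 ∧ x = ⟪u, g⟫} with hsdef
  set Ψ : ℝ := sSup {r : ℝ | ∃ u ∈ M', u ≠ 0 ∧ r = R u / ‖u‖} with hΨdef
  obtain ⟨C, hC⟩ := seminorm_bound n R
  -- s is positive and l * s ≤ 1
  have hs : 0 < s := one_div_pos.mp (lt_of_lt_of_le hl hlam)
  have hls : l * s ≤ 1 := by
    rw [le_div_iff₀ hs] at hlam; linarith
  -- the dual set is bounded above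
  have hbdd : BddAbove {x : ℝ | ∃ u, R u ≤ 1 ∧ x = ⟪u, g⟫} := by
    by_contra h
    have := csSup_of_not_bddAbove (α := ℝ) h
    rw [Real.sSup_empty] at this
    rw [hsdef, this] at hs
    exact lt_irrefl 0 hs
  -- dual norm inequality
  have hdual : ∀ u : EuclideanSpace ℝ (Fin n), ⟪u, g⟫ ≤ s * R u := by
    intro u
    rcases eq_or_lt_of_le (apply_nonneg R u) with h0 | h0
    · have hu0 : u = 0 := hdef u h0.symm
      simp [hu0]
    · have hv : R ((R u)⁻¹ • u) ≤ 1 := by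
        rw [map_smul_eq_mul]
        rw [Real.norm_eq_abs, abs_of_pos (by positivity)]
        rw [inv_mul_cancel₀ (ne_of_gt h0)]
      have hmem : ⟪(R u)⁻¹ • u, g⟫ ∈ {x : ℝ | ∃ u, R u ≤ 1 ∧ x = ⟪u, g⟫} :=
        ⟨(R u)⁻¹ • u, hv, rfl⟩
      have hle := le_csSup hbdd hmem
      rw [real_inner_smul_left] at hle
      calc ⟪u, g⟫ = R u * ((R u)⁻¹ * ⟪u, g⟫) := by
            field_simp
        _ ≤ R u * s := mul_le_mul_of_nonneg_left hle (le_of_lt h0)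
        _ = s * R u := mul_comm _ _
  -- projections
  set PA : EuclideanSpace ℝ (Fin n) := (Submodule.orthogonalProjectionOnto M' Δ : EuclideanSpace ℝ (Fin n)) with hPAdef
  set ΔB : EuclideanSpace ℝ (Fin n) := Δ - PA with hΔB
  have hBmem : ΔB ∈ M'ᗮ := Submodule.sub_starProjection_mem_orthogonal Δ
  set θperp : EuclideanSpace ℝ (Fin n) := (Submodule.orthogonalProjectionOnto Mᗮ θstar : EuclideanSpace ℝ (Fin n)) with hθperp
  set θM : EuclideanSpace ℝ (Fin n) := θstar - θperp with hθM
  have hθMmem : θM ∈ M := by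
    have h := Submodule.sub_starProjection_mem_orthogonal (K := Mᗮ) θstar
    rwa [Submodule.orthogonal_orthogonal] at h
  -- decomposability
  have hdec1 : R (θM + ΔB) = R θM + R ΔB := hdecomp θM hθMmem ΔB hBmem
  -- basic identities
  have hθhat : θstar + Δ = θhat := by rw [hΔ]; abel
  -- triangle inequalities
  have ht1 : R (θM + ΔB) ≤ R θhat + R θperp + R PA := by
    have he : θM + ΔB = θhat + -θperp + -PA := by
      rw [hθM, hΔB, hΔ]; abel
    calc R (θM + ΔB) = R (θhat + -θperp + -PA) := by rw [he]
      _ ≤ R (θhat + -θperp) + R (-PA) := map_add_le_add R _ _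
      _ ≤ R θhat + R (-θperp) + R (-PA) := by
          have := map_add_le_add R θhat (-θperp); linarith
      _ = R θhat + R θperp + R PA := by rw [map_neg_eq_map, map_neg_eq_map]
  have ht2 : R θstar ≤ R θM + R θperp := by
    have he : θstar = θM + θperp := by rw [hθM]; abel
    calc R θstar = R (θM + θperp) := by rw [← he]
      _ ≤ R θM + R θperp := map_add_le_add R _ _
  have ht3 : R Δ ≤ R PA + R ΔB := by
    have he : Δ = PA + ΔB := by rw [hΔB]; abel
    calc R Δ = R (PA + ΔB) := by rw [← he]
      _ ≤ R PA + R ΔB := map_add_le_add R _ _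
  -- strong convexity + optimality
  have hsc' : L θhat ≥ L θstar + ⟪g, Δ⟫ + κ * ‖Δ‖ ^ 2 := by
    have h := hsc θstar Δ
    rwa [hθhat] at h
  have hmin' := hmin θstar
  have hinner : -⟪g, Δ⟫ ≤ s * R Δ := by
    have h := hdual (-Δ)
    rw [map_neg_eq_map] at h
    have : ⟪-Δ, g⟫ = -⟪g, Δ⟫ := by
      rw [inner_neg_left, real_inner_comm]
    linarith [h, this ▸ h]
  -- key inequality: κ l ‖Δ‖² ≤ 2 R PA + 2 R θperp
  have hRΔnn : 0 ≤ R Δ := apply_nonneg R Δ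
  have hlsRΔ : l * s * R Δ ≤ R Δ := by
    nlinarith
  have key : κ * l * ‖Δ‖ ^ 2 ≤ 2 * R PA + 2 * R θperp := by
    have h1 : l * (L θhat - L θstar) ≤ R θstar - R θhat := by linarith
    have h2 : L θhat - L θstar ≥ ⟪g, Δ⟫ + κ * ‖Δ‖ ^ 2 := by linarith
    have h3 : l * (⟪g, Δ⟫ + κ * ‖Δ‖ ^ 2) ≤ l * (L θhat - L θstar) :=
      mul_le_mul_of_nonneg_left h2 (le_of_lt hl)
    have h4 : R θstar - R θhat ≤ 2 * R θperp + R PA - R ΔB := by linarith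
    have h5 : l * ⟪g, Δ⟫ ≥ -(l * (s * R Δ)) := by
      have := mul_le_mul_of_nonneg_left hinner (le_of_lt hl)
      linarith
    nlinarith
  -- Ψ bound
  have hΨnn : 0 ≤ Ψ := by
    apply Real.sSup_nonneg
    rintro x ⟨u, _, _, rfl⟩
    positivity
  have hΨbdd : BddAbove {r : ℝ | ∃ u ∈ M', u ≠ 0 ∧ r = R u / ‖u‖} := by
    refine ⟨C, ?_⟩
    rintro x ⟨u, _, hu0, rfl⟩
    have hn : 0 < ‖u‖ := norm_pos_iff.mpr hu0
    rw [div_le_iff₀ hn]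
    exact hC u
  have hPAnorm : ‖PA‖ ≤ ‖Δ‖ := by
    rw [hPAdef]
    have h := ContinuousLinearMap.le_opNorm (Submodule.orthogonalProjectionOnto M') Δ
    have h2 := Submodule.orthogonalProjectionOnto_norm_le M'
    calc ‖(Submodule.orthogonalProjectionOnto M' Δ : EuclideanSpace ℝ (Fin n))‖ = ‖Submodule.orthogonalProjectionOnto M' Δ‖ := rfl
      _ ≤ ‖Submodule.orthogonalProjectionOnto M'‖ * ‖Δ‖ := h
      _ ≤ 1 * ‖Δ‖ := mul_le_mul_of_nonneg_right h2 (norm_nonneg _)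
      _ = ‖Δ‖ := one_mul _
  have hPAΨ : R PA ≤ Ψ * ‖Δ‖ := by
    rcases eq_or_ne PA 0 with h0 | h0
    · rw [h0, map_zero]; positivity
    · have hmem : R PA / ‖PA‖ ∈ {r : ℝ | ∃ u ∈ M', u ≠ 0 ∧ r = R u / ‖u‖} :=
        ⟨PA, SetLike.coe_mem _, h0, rfl⟩
      have hle := le_csSup hΨbdd hmem
      have hn : 0 < ‖PA‖ := norm_pos_iff.mpr h0
      have h1 : R PA ≤ Ψ * ‖PA‖ := by
        rw [div_le_iff₀ hn] at hle; linarith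
      calc R PA ≤ Ψ * ‖PA‖ := h1
        _ ≤ Ψ * ‖Δ‖ := mul_le_mul_of_nonneg_left hPAnorm hΨnn
  -- final arithmetic
  have hc : 0 ≤ R θperp := apply_nonneg R θperp
  have ha : 0 < κ * l := mul_pos hκ hl
  have main : κ * l * ‖Δ‖ ^ 2 ≤ 2 * (Ψ * ‖Δ‖) + 2 * R θperp := by linarith
  have hkey2 : (κ * l) ^ 2 * ‖Δ‖ ^ 2 ≤ 4 * Ψ ^ 2 + 4 * (κ * l) * R θperp := by
    nlinarith [sq_nonneg (κ * l * ‖Δ‖ - 2 * Ψ), norm_nonneg Δ, mul_pos ha ha]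
  have hfin : ‖Δ‖ ^ 2 ≤ (4 * Ψ ^ 2 + 4 * (κ * l) * R θperp) / (κ * l) ^ 2 := by
    rw [le_div_iff₀ (by positivity)]
    linarith [hkey2]
  calc ‖Δ‖ ^ 2 ≤ (4 * Ψ ^ 2 + 4 * (κ * l) * R θperp) / (κ * l) ^ 2 := hfin
    _ = 4 / (κ ^ 2 * l ^ 2) * Ψ ^ 2 + 4 / (κ * l) * R θperp := by
        field_simp
end

section
/- Under the same setting as the decomposable regularization bound but with λ > 1/R*(∇L(θ*)) > 0, any minimizer θ̂ of θ ↦ R(θ) + λ·L(θ) satisfies ‖θ̂ − θ*‖₂² ≤ (2/κ²)·R*(∇L(θ*))²·Ψ(M̄)² + (8/κ²)·R*(∇L(θ*))²·Ψ(M̄^⊥)² + (4/(κλ))·R(θ*_{M^⊥}). -/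
/-!
Write `Δ = θ̂ - θ*` and `d = R*(∇L(θ*))`. Adding the strong convexity inequalities at `θ*` and at
`θ̂` gives `2κ‖Δ‖² ≤ ⟪∇L(θ̂) - ∇L(θ*), Δ⟫`. First-order optimality of `θ̂` along the ray
`θ̂ - tΔ` gives `λ⟪∇L(θ̂), Δ⟫ ≤ R(Δ)`, hence `⟪∇L(θ̂), Δ⟫ ≤ d R(Δ)` as `λ d ≥ 1`, and duality gives
`-⟪∇L(θ*), Δ⟫ ≤ d R(Δ)`; so `κ‖Δ‖² ≤ d R(Δ)`. Splitting `Δ` orthogonally along `M̄ ⊕ M̄^⊥` and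
applying Cauchy–Schwarz gives `R(Δ)² ≤ (Ψ(M̄)² + Ψ(M̄^⊥)²)‖Δ‖²`, hence
`κ²‖Δ‖² ≤ d² (Ψ(M̄)² + Ψ(M̄^⊥)²)`.
-/

open RealInnerProductSpace

namespace Seminorm

variable {E : Type*} [NormedAddCommGroup E] [InnerProductSpace ℝ E]

noncomputable def dualNorm (R : Seminorm ℝ E) (g : E) : ℝ :=
  sSup {x : ℝ | ∃ u, R u ≤ 1 ∧ x = ⟪u, g⟫}

noncomputable def subspaceCompat (R : Seminorm ℝ E) (K : Submodule ℝ E) : ℝ :=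
  sSup {r : ℝ | ∃ u ∈ K, u ≠ 0 ∧ r = R u / ‖u‖}

variable (R : Seminorm ℝ E)

theorem inner_le_dualNorm_mul {g : E} (hg : 0 < R.dualNorm g) (u : E) :
    ⟪u, g⟫ ≤ R.dualNorm g * R u := by
  have hbdd : BddAbove {x : ℝ | ∃ u, R u ≤ 1 ∧ x = ⟪u, g⟫} := by
    -- the `sSup` of a set that is not bounded above is `0`
    by_contra h
    exact hg.ne' (Real.sSup_of_not_bddAbove h)
  set d := R.dualNorm g
  refine le_of_forall_pos_le_add fun ε hε => ?_
  have ht : 0 < R u + ε / d := by have := apply_nonneg R u; positivity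
  have hv : ⟪(R u + ε / d)⁻¹ • u, g⟫ ≤ d := by
    refine le_csSup hbdd ⟨_, ?_, rfl⟩
    rw [map_smul_eq_mul, Real.norm_eq_abs, abs_of_pos (inv_pos.2 ht), inv_mul_le_iff₀ ht]
    linarith [div_pos hε hg]
  rw [real_inner_smul_left, inv_mul_le_iff₀ ht] at hv
  calc ⟪u, g⟫ ≤ (R u + ε / d) * d := hv
    _ = d * R u + ε := by field_simp

theorem subspaceCompat_nonneg (K : Submodule ℝ E) : 0 ≤ R.subspaceCompat K :=
  Real.sSup_nonneg fun _ ⟨u, _, _, hr⟩ => hr ▸ by positivity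

theorem le_subspaceCompat_mul_norm [FiniteDimensional ℝ E] {K : Submodule ℝ E} {v : E}
    (hv : v ∈ K) : R v ≤ R.subspaceCompat K * ‖v‖ := by
  obtain ⟨C, -, hC⟩ := R.bound_of_continuous_normedSpace
    (continuousOn_univ.1 (R.convexOn.continuousOn isOpen_univ))
  rcases eq_or_ne v 0 with rfl | hv0
  · simp
  have hbdd : BddAbove {r : ℝ | ∃ u ∈ K, u ≠ 0 ∧ r = R u / ‖u‖} := by
    refine ⟨C, fun r ⟨u, _, hu0, hr⟩ => ?_⟩
    rw [hr, div_le_iff₀ (norm_pos_iff.2 hu0)]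
    exact hC u
  rw [← div_le_iff₀ (norm_pos_iff.2 hv0)]
  exact le_csSup hbdd ⟨v, hv, hv0, rfl⟩

theorem sq_le_subspaceCompat_sq_add_mul [FiniteDimensional ℝ E] (K : Submodule ℝ E) (v : E) :
    R v ^ 2 ≤ (R.subspaceCompat K ^ 2 + R.subspaceCompat Kᗮ ^ 2) * ‖v‖ ^ 2 := by
  set p := K.starProjection v
  set q := Kᗮ.starProjection v
  have hpq : p + q = v := K.starProjection_add_starProjection_orthogonal v
  have hpyth : ‖v‖ ^ 2 = ‖p‖ ^ 2 + ‖q‖ ^ 2 := by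
    rw [← hpq, norm_add_sq_real, Submodule.inner_right_of_mem_orthogonal
      (K.starProjection_apply_mem v) (Kᗮ.starProjection_apply_mem v)]
    ring
  have hR : R v ≤ R.subspaceCompat K * ‖p‖ + R.subspaceCompat Kᗮ * ‖q‖ :=
    hpq ▸ (map_add_le_add R p q).trans (add_le_add
      (R.le_subspaceCompat_mul_norm (K.starProjection_apply_mem v))
      (R.le_subspaceCompat_mul_norm (Kᗮ.starProjection_apply_mem v)))
  rw [hpyth]
  nlinarith [pow_le_pow_left₀ (apply_nonneg R v) hR 2,
    sq_nonneg (R.subspaceCompat K * ‖q‖ - R.subspaceCompat Kᗮ * ‖p‖)]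

end Seminorm

section Minimizer

variable {E : Type*} [NormedAddCommGroup E] [InnerProductSpace ℝ E]
  {L : E → ℝ} {R : Seminorm ℝ E} {l κ : ℝ}

theorem two_mul_norm_sub_sq_le_inner_sub {G : E → E}
    (hsc : ∀ θ Δ : E, L (θ + Δ) ≥ L θ + ⟪G θ, Δ⟫ + κ * ‖Δ‖ ^ 2) (x y : E) :
    2 * κ * ‖y - x‖ ^ 2 ≤ ⟪G y - G x, y - x⟫ := by
  have hxy := hsc x (y - x)
  have hyx := hsc y (x - y)
  rw [add_sub_cancel] at hxy hyx
  rw [norm_sub_rev, ← neg_sub y x, inner_neg_right] at hyx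
  rw [inner_sub_left]
  linarith

theorem neg_seminorm_le_mul_inner_gradient [CompleteSpace E] {θ : E}
    (hL : DifferentiableAt ℝ L θ) (hmin : ∀ θ', R θ + l * L θ ≤ R θ' + l * L θ') (u : E) :
    -R u ≤ l * ⟪gradient L θ, u⟫ := by
  set φ : ℝ → ℝ := fun t => l * L (θ + t • u) + t * R u
  -- `t * R u` bounds the growth of `R` along the ray, so `φ` inherits the minimality of `θ`
  have hφmin : IsMinOn φ (Set.Ici 0) 0 := fun t (ht : 0 ≤ t) => by
    have hray : R (θ + t • u) ≤ R θ + t * R u := by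
      simpa [map_smul_eq_mul, abs_of_nonneg ht] using map_add_le_add R θ (t • u)
    simp only [φ, zero_smul, add_zero, zero_mul, Set.mem_ofPred_eq]
    linarith [hmin (θ + t • u)]
  have hφ : HasDerivAt φ (l * ⟪gradient L θ, u⟫ + R u) 0 := by
    have hline : HasDerivAt (fun t : ℝ => θ + t • u) u 0 := by
      simpa using ((hasDerivAt_id (0 : ℝ)).smul_const u).const_add θ
    have hL' : HasFDerivAt L (InnerProductSpace.toDual ℝ E (gradient L θ)) (θ + (0 : ℝ) • u) := by
      simpa using hL.hasGradientAt.hasFDerivAt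
    exact (((hL'.comp_hasDerivAt 0 hline).const_mul l).add
      ((hasDerivAt_id 0).mul_const (R u))).congr_deriv
        (by rw [InnerProductSpace.toDual_apply_apply, one_mul])
  have := hφmin.localize.hasFDerivWithinAt_nonneg hφ.hasFDerivAt.hasFDerivWithinAt
    (y := 1) (mem_posTangentConeAt_of_segment_subset (by simp [Set.Icc_subset_Ici_self]))
  rw [ContinuousLinearMap.toSpanSingleton_apply, one_smul] at this
  linarith

theorem mul_norm_sub_sq_le_dualNorm_mul [CompleteSpace E] {θstar θhat : E}
    (hL : DifferentiableAt ℝ L θhat)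
    (hsc : ∀ θ Δ : E, L (θ + Δ) ≥ L θ + ⟪gradient L θ, Δ⟫ + κ * ‖Δ‖ ^ 2)
    (hmin : ∀ θ, R θhat + l * L θhat ≤ R θ + l * L θ)
    (hd : 0 < R.dualNorm (gradient L θstar)) (hlam : 1 / R.dualNorm (gradient L θstar) ≤ l) :
    κ * ‖θhat - θstar‖ ^ 2 ≤ R.dualNorm (gradient L θstar) * R (θhat - θstar) := by
  set Δ := θhat - θstar
  set d := R.dualNorm (gradient L θstar)
  have hmono := two_mul_norm_sub_sq_le_inner_sub hsc θstar θhat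
  have hopt := neg_seminorm_le_mul_inner_gradient hL hmin (-Δ)
  have hdual := R.inner_le_dualNorm_mul hd (-Δ)
  rw [map_neg_eq_map, inner_neg_right] at hopt
  rw [map_neg_eq_map, inner_neg_left, real_inner_comm] at hdual
  rw [inner_sub_left] at hmono
  have hld : 1 ≤ l * d := (div_le_iff₀ hd).1 hlam
  have hl : 0 < l := lt_of_lt_of_le (one_div_pos.2 hd) hlam
  have hopt' : ⟪gradient L θhat, Δ⟫ ≤ d * R Δ := by
    refine le_of_mul_le_mul_left ?_ hl
    nlinarith [apply_nonneg R Δ]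
  linarith

theorem norm_sub_sq_le_dualNorm_sq_mul_subspaceCompat [FiniteDimensional ℝ E] {θstar θhat : E}
    (hL : DifferentiableAt ℝ L θhat) (hκ : 0 < κ)
    (hsc : ∀ θ Δ : E, L (θ + Δ) ≥ L θ + ⟪gradient L θ, Δ⟫ + κ * ‖Δ‖ ^ 2)
    (hmin : ∀ θ, R θhat + l * L θhat ≤ R θ + l * L θ)
    (hd : 0 < R.dualNorm (gradient L θstar)) (hlam : 1 / R.dualNorm (gradient L θstar) ≤ l)
    (K : Submodule ℝ E) :
    ‖θhat - θstar‖ ^ 2 ≤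
      R.dualNorm (gradient L θstar) ^ 2 * (R.subspaceCompat K ^ 2 + R.subspaceCompat Kᗮ ^ 2) /
        κ ^ 2 := by
  have hbasic := mul_norm_sub_sq_le_dualNorm_mul hL hsc hmin hd hlam
  have hsplit := R.sq_le_subspaceCompat_sq_add_mul K (θhat - θstar)
  set d := R.dualNorm (gradient L θstar)
  set S := R.subspaceCompat K ^ 2 + R.subspaceCompat Kᗮ ^ 2
  set a := ‖θhat - θstar‖ ^ 2
  have hsq : (κ * a) ^ 2 ≤ d ^ 2 * S * a := by
    calc (κ * a) ^ 2 ≤ (d * R (θhat - θstar)) ^ 2 := pow_le_pow_left₀ (by positivity) hbasic 2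
      _ ≤ d ^ 2 * (S * a) := by rw [mul_pow]; gcongr
      _ = d ^ 2 * S * a := by ring
  rw [le_div_iff₀ (by positivity)]
  rcases (show 0 ≤ a by positivity).eq_or_lt with ha | ha
  · rw [← ha, zero_mul]; positivity
  · nlinarith

end Minimizer

open RealInnerProductSpace in
theorem stmt_15_general (n : ℕ) (L : EuclideanSpace ℝ (Fin n) → ℝ)
    (hdiff : Differentiable ℝ L) (κ : ℝ) (hκ : 0 < κ)
    (hsc : ∀ θ Δ : EuclideanSpace ℝ (Fin n),
      L (θ + Δ) ≥ L θ + ⟪gradient L θ, Δ⟫ + κ * ‖Δ‖ ^ 2)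
    (R : Seminorm ℝ (EuclideanSpace ℝ (Fin n)))
    (M M' : Submodule ℝ (EuclideanSpace ℝ (Fin n)))
    (θstar θhat : EuclideanSpace ℝ (Fin n)) (l : ℝ) (hl : 0 < l)
    (hmin : ∀ θ, R θhat + l * L θhat ≤ R θ + l * L θ)
    (hdual : 0 < sSup {x : ℝ | ∃ u, R u ≤ 1 ∧ x = ⟪u, gradient L θstar⟫})
    (hlam : 1 / sSup {x : ℝ | ∃ u, R u ≤ 1 ∧ x = ⟪u, gradient L θstar⟫} < l) :
    ‖θhat - θstar‖ ^ 2 ≤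
      2 / κ ^ 2 * (sSup {x : ℝ | ∃ u, R u ≤ 1 ∧ x = ⟪u, gradient L θstar⟫}) ^ 2 *
          (sSup {r : ℝ | ∃ u ∈ M', u ≠ 0 ∧ r = R u / ‖u‖}) ^ 2 +
        8 / κ ^ 2 * (sSup {x : ℝ | ∃ u, R u ≤ 1 ∧ x = ⟪u, gradient L θstar⟫}) ^ 2 *
          (sSup {r : ℝ | ∃ u ∈ M'ᗮ, u ≠ 0 ∧ r = R u / ‖u‖}) ^ 2 +
        4 / (κ * l) * R (Submodule.orthogonalProjectionOnto Mᗮ θstar : EuclideanSpace ℝ (Fin n)) := by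
  rw [← Seminorm.dualNorm, ← Seminorm.subspaceCompat, ← Seminorm.subspaceCompat]
  calc ‖θhat - θstar‖ ^ 2
      ≤ _ := norm_sub_sq_le_dualNorm_sq_mul_subspaceCompat (hdiff θhat) hκ hsc hmin hdual hlam.le M'
    _ = 1 / κ ^ 2 * R.dualNorm (gradient L θstar) ^ 2 * R.subspaceCompat M' ^ 2 +
        1 / κ ^ 2 * R.dualNorm (gradient L θstar) ^ 2 * R.subspaceCompat M'ᗮ ^ 2 + 0 := by ring
    _ ≤ _ := by
      gcongr
      · norm_num
      · norm_num
      · exact mul_nonneg (by positivity) (apply_nonneg R _)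

open RealInnerProductSpace in
theorem stmt_15 (n : ℕ) (L : EuclideanSpace ℝ (Fin n) → ℝ)
    (hdiff : Differentiable ℝ L) (κ : ℝ) (hκ : 0 < κ)
    (hsc : ∀ θ Δ : EuclideanSpace ℝ (Fin n),
      L (θ + Δ) ≥ L θ + ⟪gradient L θ, Δ⟫ + κ * ‖Δ‖ ^ 2)
    (R : Seminorm ℝ (EuclideanSpace ℝ (Fin n))) (hdef : ∀ u, R u = 0 → u = 0)
    (M M' : Submodule ℝ (EuclideanSpace ℝ (Fin n))) (hMM' : M ≤ M')
    (hdecomp : ∀ θ ∈ M, ∀ γ ∈ M'ᗮ, R (θ + γ) = R θ + R γ)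
    (θstar θhat : EuclideanSpace ℝ (Fin n)) (l : ℝ) (hl : 0 < l)
    (hmin : ∀ θ, R θhat + l * L θhat ≤ R θ + l * L θ)
    (hdual : 0 < sSup {x : ℝ | ∃ u, R u ≤ 1 ∧ x = ⟪u, gradient L θstar⟫})
    (hlam : 1 / sSup {x : ℝ | ∃ u, R u ≤ 1 ∧ x = ⟪u, gradient L θstar⟫} < l) :
    ‖θhat - θstar‖ ^ 2 ≤
      2 / κ ^ 2 * (sSup {x : ℝ | ∃ u, R u ≤ 1 ∧ x = ⟪u, gradient L θstar⟫}) ^ 2 *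
          (sSup {r : ℝ | ∃ u ∈ M', u ≠ 0 ∧ r = R u / ‖u‖}) ^ 2 +
        8 / κ ^ 2 * (sSup {x : ℝ | ∃ u, R u ≤ 1 ∧ x = ⟪u, gradient L θstar⟫}) ^ 2 *
          (sSup {r : ℝ | ∃ u ∈ M'ᗮ, u ≠ 0 ∧ r = R u / ‖u‖}) ^ 2 +
        4 / (κ * l) * R (Submodule.orthogonalProjectionOnto Mᗮ θstar : EuclideanSpace ℝ (Fin n)) :=
  stmt_15_general n L hdiff κ hκ hsc R M M' θstar θhat l hl hmin hdual hlam
end
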